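/- arXiv:2302.05784 — 6 statements merged into one kernel-verified Lean document; each statement's English description precedes it below -/
import Mathlib

section
/- Let d and d' be odd positive integers with d ≥ 3 and d dividing d'. Then ω(d)/φ(d) ≥ ω(d')/φ(d'), where ω counts the number of distinct prime divisors and φ is Euler's totient function. -/
/-!
Multiplying `n > 1` by a prime `p` either keeps `ω` and multiplies `φ` by `p` (if `p ∣ n`), or
adds one to `ω` and multiplies `φ` by `p - 1 ≥ 2` (if `p ∤ n`); since `ω(n) ≥ 1`, in both cases
`ω/φ` does not increase when `p` is odd. Peeling off the odd prime factors of `d' / d` one at a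
time gives the theorem.
-/

namespace Nat

def omegaDivTotient (n : ℕ) : ℚ := n.primeFactors.card / n.totient

lemma primeFactors_prime_mul_of_dvd {p n : ℕ} (hp : p.Prime) (hn : n ≠ 0) (h : p ∣ n) :
    (p * n).primeFactors = n.primeFactors := by
  rw [primeFactors_mul hp.ne_zero hn, hp.primeFactors, Finset.singleton_union]
  exact Finset.insert_eq_self.2 (mem_primeFactors.2 ⟨hp, h, hn⟩)

lemma card_primeFactors_prime_mul_of_not_dvd {p n : ℕ} (hp : p.Prime) (hn : n ≠ 0)
    (h : ¬p ∣ n) : (p * n).primeFactors.card = n.primeFactors.card + 1 := by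
  rw [primeFactors_mul hp.ne_zero hn, hp.primeFactors, Finset.singleton_union,
    Finset.card_insert_of_notMem fun hmem => h (dvd_of_mem_primeFactors hmem)]

lemma omegaDivTotient_prime_mul_le {p n : ℕ} (hp : p.Prime) (hp3 : 3 ≤ p) (hn : 1 < n) :
    omegaDivTotient (p * n) ≤ omegaDivTotient n := by
  have hφ : (0 : ℚ) < n.totient := by exact_mod_cast totient_pos.2 (by omega)
  have hω : (1 : ℚ) ≤ n.primeFactors.card := by
    exact_mod_cast Finset.card_pos.2 (nonempty_primeFactors.2 hn)
  have hp3' : (3 : ℚ) ≤ p := by exact_mod_cast hp3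
  unfold omegaDivTotient
  by_cases h : p ∣ n
  · rw [primeFactors_prime_mul_of_dvd hp (by omega) h, totient_mul_of_prime_of_dvd hp h]
    push_cast
    gcongr
    nlinarith
  · rw [card_primeFactors_prime_mul_of_not_dvd hp (by omega) h,
      totient_mul_of_prime_of_not_dvd hp h]
    push_cast [Nat.cast_sub hp.one_le]
    rw [div_le_div_iff₀ (by nlinarith) hφ]
    have key : (n.primeFactors.card + 1 : ℚ) ≤ n.primeFactors.card * (p - 1) := by nlinarith
    nlinarith

lemma omegaDivTotient_mul_odd_le {n : ℕ} (hn : 1 < n) :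
    ∀ k : ℕ, Odd k → omegaDivTotient (n * k) ≤ omegaDivTotient n := by
  refine induction_on_primes (by simp) (by simp) fun p k hp ih hpk => ?_
  obtain ⟨hp_odd, hk_odd⟩ := odd_mul.1 hpk
  calc omegaDivTotient (n * (p * k)) = omegaDivTotient (p * (n * k)) := by
        rw [mul_left_comm]
    _ ≤ omegaDivTotient (n * k) := omegaDivTotient_prime_mul_le hp (hp.odd_iff.1 hp_odd)
        (one_lt_mul_iff.2 ⟨by omega, hk_odd.pos, by omega⟩)
    _ ≤ omegaDivTotient n := ih hk_odd

end Nat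

theorem omega_div_totient_antitone_on_odd_general (d d' : ℕ) (hd' : Odd d')
    (h3 : 3 ≤ d) (hdvd : d ∣ d') :
    (d'.primeFactors.card : ℚ) / d'.totient ≤ (d.primeFactors.card : ℚ) / d.totient := by
  obtain ⟨k, rfl⟩ := hdvd
  exact Nat.omegaDivTotient_mul_odd_le (by omega) k (Nat.odd_mul.1 hd').2

theorem omega_div_totient_antitone_on_odd (d d' : ℕ) (hd : Odd d) (hd' : Odd d')
    (h3 : 3 ≤ d) (hdvd : d ∣ d') :
    (d'.primeFactors.card : ℚ) / d'.totient ≤ (d.primeFactors.card : ℚ) / d.totient :=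
  omega_div_totient_antitone_on_odd_general d d' hd' h3 hdvd
end

section
/- Let d and d' be odd positive integers with d ≥ 3 and d dividing d'. Then ω(d)/φ(d) = ω(d')/φ(d') if and only if either d = d', or d is a prime power p^α with p ≥ 5 and d' = 3d. -/
/-!
Let `T` be the set of primes dividing `d'` but not `d`, and write `d' = d * (∏ q ∈ T, q) * j`.
Euler's product formula gives `φ d' = φ d * (j * ∏ q ∈ T, (q - 1))`, so the equality of the two
ratios becomes `ω d * (j * ∏ q ∈ T, (q - 1)) = ω d + #T`. Since `d'` is odd, every `q - 1` is at
least `2`, so the left side is at least `ω d * j * 2 ^ #T` while the right side is linear in `#T`.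
Hence `j = 1` and either `T = ∅` (so `d = d'`), or `T = {3}` and `ω d = 1`
(so `d = p ^ α` and `d' = 3 d`).
-/

open scoped Nat

namespace Nat

theorem three_le_of_mem_primeFactors_of_odd {n q : ℕ} (hn : Odd n) (hq : q ∈ n.primeFactors) :
    3 ≤ q := by
  have := hn.ne_two_of_dvd_nat (dvd_of_mem_primeFactors hq)
  have := (prime_of_mem_primeFactors hq).two_le
  omega

theorem mul_prod_primeFactors_sdiff_dvd {d d' : ℕ} (h : d ∣ d') (hd' : d' ≠ 0) :
    d * ∏ q ∈ d'.primeFactors \ d.primeFactors, q ∣ d' := by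
  refine Coprime.mul_dvd_of_dvd_of_dvd (Coprime.prod_right fun q hq => ?_) h
    ((Finset.prod_dvd_prod_of_subset _ _ _ Finset.sdiff_subset).trans (prod_primeFactors_dvd d'))
  obtain ⟨hqd', hqd⟩ := Finset.mem_sdiff.1 hq
  have hq := prime_of_mem_primeFactors hqd'
  refine (hq.coprime_iff_not_dvd.2 fun hdvd => hqd ?_).symm
  exact mem_primeFactors.2 ⟨hq, hdvd, ne_zero_of_dvd_ne_zero hd' h⟩

theorem totient_mul_prod_primeFactors_sdiff {d m : ℕ} (hd : d ≠ 0) (hm : m ≠ 0) :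
    φ (d * m) * ∏ q ∈ (d * m).primeFactors \ d.primeFactors, q =
      φ d * m * ∏ q ∈ (d * m).primeFactors \ d.primeFactors, (q - 1) := by
  have hsub : d.primeFactors ⊆ (d * m).primeFactors :=
    primeFactors_mono (dvd_mul_right d m) (mul_ne_zero hd hm)
  refine Nat.eq_of_mul_eq_mul_right
    (Finset.prod_pos fun p hp => pos_of_mem_primeFactors hp : 0 < ∏ p ∈ d.primeFactors, p) ?_
  calc _ = φ (d * m) * ∏ p ∈ (d * m).primeFactors, p := by
        rw [mul_assoc, Finset.prod_sdiff hsub]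
    _ = d * m * ∏ p ∈ (d * m).primeFactors, (p - 1) := totient_mul_prod_primeFactors _
    _ = d * (∏ p ∈ d.primeFactors, (p - 1)) * m *
          ∏ q ∈ (d * m).primeFactors \ d.primeFactors, (q - 1) := by
        rw [← Finset.prod_sdiff hsub]; ring
    _ = φ d * (∏ p ∈ d.primeFactors, p) * m *
          ∏ q ∈ (d * m).primeFactors \ d.primeFactors, (q - 1) := by
        rw [totient_mul_prod_primeFactors]
    _ = _ := by ring

theorem totient_eq_of_eq_mul_prod_primeFactors_sdiff_mul {d d' j : ℕ} (hd' : d' ≠ 0)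
    (h : d' = d * (∏ q ∈ d'.primeFactors \ d.primeFactors, q) * j) :
    φ d' = φ d * (j * ∏ q ∈ d'.primeFactors \ d.primeFactors, (q - 1)) := by
  have hd : d ≠ 0 := by rintro rfl; exact hd' (by simpa using h)
  have hm : (∏ q ∈ d'.primeFactors \ d.primeFactors, q) * j ≠ 0 := by
    rintro hm; rw [mul_assoc, hm, mul_zero] at h; exact hd' h
  have key := totient_mul_prod_primeFactors_sdiff hd hm
  rw [← mul_assoc, ← h] at key
  have hT : 0 < ∏ q ∈ d'.primeFactors \ d.primeFactors, q :=
    Finset.prod_pos fun q hq => pos_of_mem_primeFactors (Finset.mem_sdiff.1 hq).1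
  refine Nat.eq_of_mul_eq_mul_right hT ?_
  rw [key]; ring

theorem exists_prime_pow_of_card_primeFactors_eq_one {n : ℕ} (hn : Odd n)
    (h1 : n.primeFactors.card = 1) (h3 : 3 ∉ n.primeFactors) :
    ∃ p α : ℕ, p.Prime ∧ 5 ≤ p ∧ 0 < α ∧ n = p ^ α := by
  obtain ⟨p, α, hp, hα, rfl⟩ := isPrimePow_iff_card_primeFactors_eq_one.2 h1
  rw [← Nat.prime_iff] at hp
  obtain ⟨k, hk⟩ : Odd p := hn.of_dvd_nat (dvd_pow_self p hα.ne')
  have hp3 : p ≠ 3 := by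
    rintro rfl
    exact h3 (by simp [primeFactors_prime_pow hα.ne' hp])
  have := hp.two_le
  exact ⟨p, α, hp, by omega, hα, rfl⟩

theorem cast_div_eq_cast_div_mul_iff {a b c k : ℕ} (hc : c ≠ 0) (hk : k ≠ 0) :
    (a : ℚ) / c = b / (c * k : ℕ) ↔ a * k = b := by
  rw [div_eq_div_iff (by exact_mod_cast hc) (by exact_mod_cast mul_ne_zero hc hk),
    ← cast_mul, ← cast_mul, cast_inj, mul_comm c k, ← mul_assoc]
  exact Nat.mul_left_inj hc

end Nat

theorem eq_one_and_eq_empty_or_eq_singleton_three_of_mul_prod_sub_one_eq {w j : ℕ}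
    {T : Finset ℕ} (hw : 0 < w) (hT : ∀ q ∈ T, 3 ≤ q)
    (h : w * (j * ∏ q ∈ T, (q - 1)) = w + T.card) :
    j = 1 ∧ (T = ∅ ∨ w = 1 ∧ T = {3}) := by
  have hj : j ≠ 0 := by rintro rfl; simp only [zero_mul, mul_zero] at h; omega
  have hcard : T.card ≤ 1 := by
    by_contra! hcard
    obtain ⟨s, hs⟩ : ∃ s, T.card = s + 2 := ⟨T.card - 2, by omega⟩
    have hs2 : s < 2 ^ s := Nat.lt_two_pow_self
    have hprod : 2 ^ T.card ≤ ∏ q ∈ T, (q - 1) :=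
      Finset.pow_card_le_prod _ _ _ fun q hq => by have := hT q hq; omega
    have : w * 2 ^ T.card ≤ w + T.card := by
      rw [← h]; gcongr; exact hprod.trans (Nat.le_mul_of_pos_left _ (Nat.pos_of_ne_zero hj))
    rw [hs, pow_add] at this
    nlinarith
  rcases Nat.le_one_iff_eq_zero_or_eq_one.1 hcard with hT0 | hT1
  · rw [Finset.card_eq_zero] at hT0
    subst hT0
    simp only [Finset.prod_empty, mul_one, Finset.card_empty, add_zero] at h
    exact ⟨(Nat.mul_eq_left hw.ne').1 h, Or.inl rfl⟩
  · obtain ⟨q, rfl⟩ := Finset.card_eq_one.1 hT1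
    obtain ⟨r, rfl⟩ := Nat.exists_eq_add_of_le' (hT q (Finset.mem_singleton_self q))
    rw [Finset.prod_singleton, Finset.card_singleton, show r + 3 - 1 = r + 2 by omega] at h
    have hj1 : 1 ≤ j := Nat.one_le_iff_ne_zero.2 hj
    have : w * (1 * 2) ≤ w * (j * (r + 2)) := by gcongr; omega
    obtain rfl : w = 1 := by omega
    obtain ⟨rfl, rfl⟩ : j = 1 ∧ r = 0 := by constructor <;> nlinarith
    exact ⟨rfl, Or.inr ⟨rfl, rfl⟩⟩

theorem card_primeFactors_div_totient_three_mul_prime_pow {p α : ℕ} (hp : p.Prime)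
    (hp3 : p ≠ 3) (hα : α ≠ 0) :
    ((3 * p ^ α).primeFactors.card : ℚ) / φ (3 * p ^ α) =
      (p ^ α).primeFactors.card / φ (p ^ α) := by
  have hcop : Nat.Coprime 3 (p ^ α) :=
    Nat.Coprime.pow_right _ ((Nat.coprime_primes Nat.prime_three hp).2 hp3.symm)
  have hφ : (φ (p ^ α) : ℚ) ≠ 0 := by exact_mod_cast (Nat.totient_pos.2 (pow_pos hp.pos α)).ne'
  rw [Nat.Coprime.primeFactors_mul hcop, Nat.totient_mul hcop, Nat.primeFactors_prime_pow hα hp,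
    Nat.prime_three.primeFactors, Nat.totient_prime Nat.prime_three,
    Finset.card_union_of_disjoint (by simpa using hp3.symm)]
  push_cast
  field_simp
  norm_num

theorem omega_div_totient_eq_iff (d d' : ℕ) (hd : Odd d) (hd' : Odd d')
    (h3 : 3 ≤ d) (hdvd : d ∣ d') :
    (d.primeFactors.card : ℚ) / d.totient = (d'.primeFactors.card : ℚ) / d'.totient ↔
      d = d' ∨ ∃ p α : ℕ, p.Prime ∧ 5 ≤ p ∧ 0 < α ∧ d = p ^ α ∧ d' = 3 * d := by
  have hd'0 : d' ≠ 0 := hd'.pos.ne'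
  obtain ⟨j, hj⟩ := Nat.mul_prod_primeFactors_sdiff_dvd hdvd hd'0
  have hφ := Nat.totient_eq_of_eq_mul_prod_primeFactors_sdiff_mul hd'0 hj
  have hω : d'.primeFactors.card =
      d.primeFactors.card + (d'.primeFactors \ d.primeFactors).card := by
    rw [add_comm, Finset.card_sdiff_add_card_eq_card (Nat.primeFactors_mono hdvd hd'0)]
  constructor
  · intro h
    have hw : 0 < d.primeFactors.card :=
      Finset.card_pos.2 (Nat.nonempty_primeFactors.2 (by omega))
    rw [hφ, hω, Nat.cast_div_eq_cast_div_mul_iff (Nat.totient_pos.2 (by omega)).ne'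
      (right_ne_zero_of_mul (hφ ▸ (Nat.totient_pos.2 hd'.pos).ne'))] at h
    obtain ⟨rfl, hT | ⟨hw1, hT⟩⟩ := eq_one_and_eq_empty_or_eq_singleton_three_of_mul_prod_sub_one_eq
      hw (fun q hq => Nat.three_le_of_mem_primeFactors_of_odd hd' (Finset.mem_sdiff.1 hq).1) h
    · left
      simpa [hT] using hj.symm
    · right
      obtain ⟨p, α, hp, hp5, hα, rfl⟩ := Nat.exists_prime_pow_of_card_primeFactors_eq_one hd hw1
        (Finset.mem_sdiff.1 (hT ▸ Finset.mem_singleton_self 3)).2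
      exact ⟨p, α, hp, hp5, hα, rfl, by rw [hj, hT, Finset.prod_singleton]; ring⟩
  · rintro (rfl | ⟨p, α, hp, hp5, hα, rfl, rfl⟩)
    · rfl
    · exact (card_primeFactors_div_totient_three_mul_prime_pow hp (by omega) hα.ne').symm
end

section
/- For every finite group G, the number of edges of the cyclic subgroup graph of G equals the sum over all elements a ∈ G of ω(o(a))/φ(o(a)), where o(a) is the order of a, ω counts distinct prime divisors, and φ is Euler's totient function. -/
/-- The edge set of the cyclic subgroup graph of `G`: pairs `(H₁, H₂)` of cyclic
subgroups with `H₁ < H₂` and no cyclic subgroup strictly between them. -/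
def cyclicGraphEdges (G : Type*) [Group G] : Set (Subgroup G × Subgroup G) :=
  {e | IsCyclic e.1 ∧ IsCyclic e.2 ∧ e.1 < e.2 ∧
    ∀ K : Subgroup G, IsCyclic K → e.1 < K → ¬ K < e.2}

/-- The number of edges of the cyclic subgroup graph of `G`. -/
noncomputable def numCyclicEdges (G : Type*) [Group G] : ℕ :=
  Nat.card (cyclicGraphEdges G)

/-!
An edge `(H₁, H₂)` is a covering pair `H₁ ⋖ H₂` with `H₂` cyclic, since subgroups of a cyclic
group are cyclic; so the edges below `H₂` are its maximal subgroups. In a finite cyclic group the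
subgroups correspond to the divisors of the order (`H ≤ K ↔ K.index ∣ H.index`), and the maximal
ones are those of prime index, so `H₂` has `ω(|H₂|)` of them. Grouping the elements `a` by the
cyclic subgroup `⟨a⟩`, each cyclic `H` is generated by `φ(|H|)` elements, all of order `|H|`, so
the right-hand side is also `∑_H ω(|H|)`.
-/

open Subgroup

namespace IsCyclic

variable {α : Type*} [Group α] [Finite α] [IsCyclic α]

theorem mem_subgroup_iff_pow_card_eq_one (K : Subgroup α) {x : α} :
    x ∈ K ↔ x ^ Nat.card K = 1 := by
  classical
  -- `K` lies in `{x | x ^ Nat.card K = 1}`, which has at most `Nat.card K` elements.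
  have := Fintype.ofFinite α
  suffices (K : Set α) = {x | x ^ Nat.card K = 1} from Set.ext_iff.mp this x
  refine Set.eq_of_subset_of_ncard_le (fun y hy => ?_) ?_ (Set.toFinite _)
  · exact congrArg Subtype.val (pow_card_eq_one' (x := (⟨y, hy⟩ : K)))
  · rw [Set.ncard_eq_toFinset_card', Set.toFinset_ofPred, ← Nat.card_coe_set_eq,
      SetLike.coe_sort_coe]
    exact card_pow_eq_one_le Nat.card_pos

theorem subgroup_le_iff_index_dvd {H K : Subgroup α} : H ≤ K ↔ K.index ∣ H.index := by
  refine ⟨index_dvd_of_le, fun ⟨c, hc⟩ x hx => ?_⟩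
  have hcard : Nat.card H * c = Nat.card K := by
    refine Nat.eq_of_mul_eq_mul_right (Nat.pos_of_ne_zero (index_ne_zero_of_finite (H := K))) ?_
    rw [card_mul_index, mul_assoc, mul_comm c, ← hc, card_mul_index]
  rw [mem_subgroup_iff_pow_card_eq_one] at hx ⊢
  rw [← hcard, pow_mul, hx, one_pow]

theorem exists_subgroup_index_eq {d : ℕ} (hd : d ∣ Nat.card α) :
    ∃ K : Subgroup α, K.index = d := by
  obtain ⟨g, hg⟩ := exists_ofOrder_eq_natCard (α := α)
  have hd0 : d ≠ 0 := by rintro rfl; exact Nat.card_pos.ne' (zero_dvd_iff.mp hd)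
  refine ⟨zpowers (g ^ d), Nat.eq_of_mul_eq_mul_right (Nat.card_pos (α := zpowers (g ^ d))) ?_⟩
  rw [index_mul_card, Nat.card_zpowers, orderOf_pow_of_dvd hd0 (hg ▸ hd), hg,
    Nat.mul_div_cancel' hd]

theorem isCoatom_iff_prime_index {K : Subgroup α} : IsCoatom K ↔ K.index.Prime := by
  constructor
  · intro hK
    have hq : K.index ≠ 1 := fun h => hK.1 (index_eq_one.mp h)
    obtain ⟨L, hL⟩ := exists_subgroup_index_eq
      ((Nat.minFac_dvd K.index).trans K.index_dvd_card)
    have hKL : K ≤ L := subgroup_le_iff_index_dvd.mpr (hL ▸ Nat.minFac_dvd _)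
    have hLtop : L ≠ ⊤ := fun h => (Nat.minFac_prime hq).ne_one (hL ▸ index_eq_one.mpr h)
    rw [hKL.eq_of_not_lt fun h => hLtop (hK.2 L h), hL]
    exact Nat.minFac_prime hq
  · intro hp
    refine ⟨fun h => hp.ne_one (index_eq_one.mpr h), fun L hKL => ?_⟩
    rcases hp.eq_one_or_self_of_dvd _ (index_dvd_of_le hKL.le) with h | h
    · exact index_eq_one.mp h
    · exact absurd (subgroup_le_iff_index_dvd.mpr h.symm.dvd) hKL.not_ge

theorem card_isCoatom_subgroup :
    Nat.card {K : Subgroup α // IsCoatom K} = (Nat.card α).primeFactors.card := by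
  rw [← Nat.card_eq_finsetCard]
  refine Nat.card_eq_of_bijective (fun K => ⟨K.1.index, ?_⟩) ⟨fun K L h => ?_, fun p => ?_⟩
  · exact Nat.mem_primeFactors.mpr ⟨isCoatom_iff_prime_index.mp K.2, K.1.index_dvd_card,
      Nat.card_pos.ne'⟩
  · have h : K.1.index = L.1.index := congrArg Subtype.val h
    exact Subtype.ext (le_antisymm (subgroup_le_iff_index_dvd.mpr h.symm.dvd)
      (subgroup_le_iff_index_dvd.mpr h.dvd))
  · obtain ⟨hp, hpn, -⟩ := Nat.mem_primeFactors.mp p.2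
    obtain ⟨K, hK⟩ := exists_subgroup_index_eq hpn
    exact ⟨⟨K, isCoatom_iff_prime_index.mpr (hK ▸ hp)⟩, Subtype.ext hK⟩

end IsCyclic

namespace Subgroup

variable {G : Type*} [Group G]

theorem card_covBy_eq_card_isCoatom (H : Subgroup G) :
    Nat.card {K : Subgroup G // K ⋖ H} = Nat.card {K : Subgroup H // IsCoatom K} := by
  let e : Subgroup H ≃o Set.Iic H := MapSubtype.orderIso H
  exact Nat.card_congr <| ((Equiv.subtypeSubtypeEquivSubtype fun h => h.le).symm.trans
    (Equiv.subtypeEquivRight fun a => Set.Iic.isCoatom_iff.symm)).trans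
    (e.toEquiv.subtypeEquiv fun K => (e.isCoatom_iff K).symm).symm

theorem card_generators_eq_totient (H : Subgroup G) [IsCyclic H] [Finite H] :
    Nat.card {a : G // zpowers a = H} = (Nat.card H).totient := by
  classical
  have := Fintype.ofFinite H
  rw [Nat.card_eq_fintype_card (α := H), ← IsCyclic.card_orderOf_eq_totient dvd_rfl,
    ← Fintype.card_subtype, ← Nat.card_eq_fintype_card, ← Nat.card_eq_fintype_card]
  refine Nat.card_congr
    { toFun := fun a => ⟨⟨a, a.2.le (mem_zpowers a.1)⟩, ?_⟩
      invFun := fun x => ⟨x.1, eq_of_le_of_card_ge (zpowers_le.mpr x.1.2) ?_⟩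
      left_inv := fun _ => rfl
      right_inv := fun _ => rfl }
  · rw [← orderOf_coe, ← Nat.card_zpowers, a.2]
  · rw [Nat.card_zpowers, orderOf_coe, x.2]

end Subgroup

section CyclicSubgroupGraph

variable {G : Type*} [Group G]

theorem mem_cyclicGraphEdges_iff {H₁ H₂ : Subgroup G} :
    (H₁, H₂) ∈ cyclicGraphEdges G ↔ IsCyclic H₂ ∧ H₁ ⋖ H₂ :=
  ⟨fun ⟨_, h₂, hlt, hK⟩ => ⟨h₂, hlt, fun K h₁ h₂' => hK K (isCyclic_of_le h₂'.le) h₁ h₂'⟩,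
    fun ⟨h₂, hlt, hK⟩ => ⟨isCyclic_of_le hlt.le, h₂, hlt, fun _ _ h => hK h⟩⟩

theorem numCyclicEdges_eq_sum_card_primeFactors [Finite G]
    [Fintype {H : Subgroup G // IsCyclic H}] :
    numCyclicEdges G = ∑ H : {H : Subgroup G // IsCyclic H}, (Nat.card H.1).primeFactors.card := by
  let e : cyclicGraphEdges G ≃ Σ H : {H : Subgroup G // IsCyclic H}, {K : Subgroup G // K ⋖ H.1} :=
    { toFun := fun x => ⟨⟨x.1.2, (mem_cyclicGraphEdges_iff.mp x.2).1⟩,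
        ⟨x.1.1, (mem_cyclicGraphEdges_iff.mp x.2).2⟩⟩
      invFun := fun x => ⟨(x.2.1, x.1.1), mem_cyclicGraphEdges_iff.mpr ⟨x.1.2, x.2.2⟩⟩
      left_inv := fun _ => rfl
      right_inv := fun _ => rfl }
  rw [numCyclicEdges, Nat.card_congr e, Nat.card_sigma]
  refine Finset.sum_congr rfl fun H _ => ?_
  have := H.2
  rw [Subgroup.card_covBy_eq_card_isCoatom, IsCyclic.card_isCoatom_subgroup]

theorem sum_orderOf_eq_sum_isCyclic [Fintype G] [Fintype {H : Subgroup G // IsCyclic H}]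
    {M : Type*} [AddCommMonoid M] (f : ℕ → M) :
    ∑ a : G, f (orderOf a) =
      ∑ H : {H : Subgroup G // IsCyclic H}, (Nat.card H.1).totient • f (Nat.card H.1) := by
  classical
  let gen : G → {H : Subgroup G // IsCyclic H} := fun a => ⟨zpowers a, inferInstance⟩
  rw [← Finset.sum_fiberwise Finset.univ gen]
  refine Finset.sum_congr rfl fun H _ => ?_
  have := H.2
  have hfib : ∀ a ∈ Finset.univ.filter (gen · = H), f (orderOf a) = f (Nat.card H.1) := by
    intro a ha
    rw [← Nat.card_zpowers, ← (Finset.mem_filter.mp ha).2]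
  rw [Finset.sum_congr rfl hfib, Finset.sum_const, ← Subgroup.card_generators_eq_totient]
  congr 1
  rw [Nat.card_eq_fintype_card, Fintype.card_subtype]
  simp only [gen, Subtype.ext_iff]

end CyclicSubgroupGraph

theorem numCyclicEdges_eq_sum (G : Type*) [Group G] [Fintype G] :
    (numCyclicEdges G : ℚ) =
      ∑ a : G, ((orderOf a).primeFactors.card : ℚ) / (orderOf a).totient := by
  have := Fintype.ofFinite {H : Subgroup G // IsCyclic H}
  rw [numCyclicEdges_eq_sum_card_primeFactors,
    sum_orderOf_eq_sum_isCyclic fun n => (n.primeFactors.card : ℚ) / n.totient]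
  push_cast
  refine Finset.sum_congr rfl fun H _ => ?_
  have htot : ((Nat.card H.1).totient : ℚ) ≠ 0 := by
    exact_mod_cast (Nat.totient_pos.mpr Nat.card_pos).ne'
  rw [nsmul_eq_mul, mul_div_cancel₀ _ htot]
end

section
/- For a finite p-group G, the number of edges of the cyclic subgroup graph of G equals |C(G)| − 1, where C(G) is the set of cyclic subgroups of G. -/
/-!
A finite cyclic group has at most one subgroup of each order, so in a cyclic `p`-group, whose
subgroups have orders `p ^ k`, the subgroups form a chain. Hence in a `p`-group every nontrivial
cyclic subgroup `K` covers exactly one cyclic subgroup (its unique maximal subgroup), and sending an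
edge of the cyclic subgroup graph to its upper end is a bijection onto the nontrivial cyclic
subgroups.
-/

section IsCyclic

variable {Γ : Type*} [Group Γ] [Finite Γ] [IsCyclic Γ]

theorem Subgroup.le_of_card_dvd_of_isCyclic {H K : Subgroup Γ}
    (h : Nat.card H ∣ Nat.card K) : H ≤ K := by
  classical
  cases nonempty_fintype Γ
  let S : Finset Γ := {x | x ^ Nat.card K = 1}
  have hKS : (K : Set Γ).toFinset ⊆ S := fun x hx => by
    rw [Set.mem_toFinset] at hx
    simpa [S] using orderOf_dvd_iff_pow_eq_one.mp (K.orderOf_dvd_natCard hx)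
  -- `K` fills `S`, which has at most `|K|` elements because `Γ` is cyclic
  have hKS_eq : (K : Set Γ).toFinset = S := by
    refine Finset.eq_of_subset_of_card_le hKS ?_
    rw [← Nat.card_eq_card_toFinset]
    exact IsCyclic.card_pow_eq_one_le Nat.card_pos
  intro x hx
  have hxS : x ∈ S := by
    simpa [S] using orderOf_dvd_iff_pow_eq_one.mp ((H.orderOf_dvd_natCard hx).trans h)
  rwa [← hKS_eq, Set.mem_toFinset] at hxS

theorem IsPGroup.le_total_of_isCyclic {p : ℕ} [Fact p.Prime] (hΓ : IsPGroup p Γ)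
    (H K : Subgroup Γ) : H ≤ K ∨ K ≤ H := by
  obtain ⟨m, hm⟩ := IsPGroup.iff_card.mp (hΓ.to_subgroup H)
  obtain ⟨n, hn⟩ := IsPGroup.iff_card.mp (hΓ.to_subgroup K)
  rcases le_total m n with hmn | hnm
  · exact .inl (Subgroup.le_of_card_dvd_of_isCyclic (by rw [hm, hn]; exact pow_dvd_pow p hmn))
  · exact .inr (Subgroup.le_of_card_dvd_of_isCyclic (by rw [hm, hn]; exact pow_dvd_pow p hnm))

end IsCyclic

section PGroup

variable {G : Type*} [Group G] [Finite G] {p : ℕ} [Fact p.Prime]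

theorem IsPGroup.le_total_of_le_of_isCyclic (hG : IsPGroup p G) {K H H' : Subgroup G}
    [IsCyclic K] (hH : H ≤ K) (hH' : H' ≤ K) : H ≤ H' ∨ H' ≤ H := by
  have hmap : ∀ L ≤ K, (L.subgroupOf K).map K.subtype = L := fun L hL => by
    rw [Subgroup.subgroupOf_map_subtype, inf_eq_left.mpr hL]
  rw [← hmap H hH, ← hmap H' hH']
  exact ((hG.to_subgroup K).le_total_of_isCyclic _ _).imp Subgroup.map_mono Subgroup.map_mono

theorem IsPGroup.eq_of_mem_cyclicGraphEdges_of_snd_eq (hG : IsPGroup p G)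
    {e e' : Subgroup G × Subgroup G} (he : e ∈ cyclicGraphEdges G)
    (he' : e' ∈ cyclicGraphEdges G) (h : e.2 = e'.2) : e = e' := by
  obtain ⟨H, K⟩ := e
  obtain ⟨H', K'⟩ := e'
  obtain ⟨hH, hK, hHK, hcov⟩ := he
  obtain ⟨hH', -, hHK', hcov'⟩ := he'
  dsimp only at *
  subst h
  rcases hG.le_total_of_le_of_isCyclic hHK.le hHK'.le with hle | hle
  · obtain rfl := hle.eq_of_not_lt fun hlt => hcov H' hH' hlt hHK'
    rfl
  · obtain rfl := hle.eq_of_not_lt fun hlt => hcov' H hH hlt hHK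
    rfl

end PGroup

theorem exists_mem_cyclicGraphEdges_of_ne_bot {G : Type*} [Group G] [Finite G] {K : Subgroup G}
    (hK : IsCyclic K) (hK_ne : K ≠ ⊥) : ∃ H, (H, K) ∈ cyclicGraphEdges G := by
  have hne : {L : Subgroup G | IsCyclic L ∧ L < K}.Nonempty :=
    ⟨⊥, isCyclic_of_subsingleton, bot_lt_iff_ne_bot.mpr hK_ne⟩
  obtain ⟨H, ⟨hH, hHK⟩, hmax⟩ := (Set.toFinite _).exists_maximalFor id _ hne
  exact ⟨H, hH, hK, hHK, fun L hL hHL hLK => hHL.not_ge (hmax ⟨hL, hLK⟩ hHL.le)⟩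

theorem numCyclicEdges_pGroup (G : Type*) [Group G] [Finite G] (p : ℕ)
    (hp : p.Prime) (hG : IsPGroup p G) :
    numCyclicEdges G = Nat.card {H : Subgroup G | IsCyclic H} - 1 := by
  have : Fact p.Prime := ⟨hp⟩
  let top : cyclicGraphEdges G → ({H : Subgroup G | IsCyclic H} \ {⊥} : Set (Subgroup G)) :=
    fun e => ⟨e.1.2, e.2.2.1, ne_bot_of_gt e.2.2.2.1⟩
  have htop : Function.Bijective top := by
    refine ⟨fun e e' h => Subtype.ext
      (hG.eq_of_mem_cyclicGraphEdges_of_snd_eq e.2 e'.2 congr($h.1)), ?_⟩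
    rintro ⟨K, hK, hK_ne⟩
    obtain ⟨H, he⟩ := exists_mem_cyclicGraphEdges_of_ne_bot hK hK_ne
    exact ⟨⟨(H, K), he⟩, rfl⟩
  rw [numCyclicEdges, Nat.card_eq_of_bijective top htop, Nat.card_coe_set_eq, Nat.card_coe_set_eq,
    Set.ncard_sdiff_singleton_of_mem (s := {H : Subgroup G | IsCyclic H}) isCyclic_of_subsingleton]
end

section
/- If G_1, ..., G_k are finite groups of pairwise coprime orders and G = G_1 × ⋯ × G_k, then |E(C(G)*)| = (∑_{i=1}^k |E(C(G_i)*)|/|C(G_i)|) · ∏_{i=1}^k |C(G_i)|, where C(G)* denotes the cyclic subgroup graph. -/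
/-!
If the orders of the `G i` are pairwise coprime, then for `x ∈ ∏ G i` a suitable power `x ^ n`
(with `n ≡ 1` mod `|G i|` and `n ≡ 0` mod `|G j|` for `j ≠ i`) is the `i`-th coordinate of `x`.
Hence every subgroup of the product is the product of its projections, and it is cyclic iff all
projections are: the poset of cyclic subgroups of `∏ G i` is the product of the posets of cyclic
subgroups of the `G i`. In a product of posets, `b` covers `a` iff `b` arises from `a` by replacing
one coordinate by a cover, so a covering pair of the product is a coordinate `i`, a covering pair
of the `i`-th factor and an arbitrary element of each other factor.
-/

open Function Set

theorem OrderIso.card_covBy_eq {α β : Type*} [Preorder α] [Preorder β] (e : α ≃o β) :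
    Nat.card {p : α × α // p.1 ⋖ p.2} = Nat.card {p : β × β // p.1 ⋖ p.2} :=
  Nat.card_congr <| (e.toEquiv.prodCongr e.toEquiv).subtypeEquiv fun _ =>
    (apply_covBy_apply_iff e).symm

theorem card_covBy_eq_sum {α : Type*} [Preorder α] [Fintype α] :
    Nat.card {p : α × α // p.1 ⋖ p.2} = ∑ a : α, Nat.card {b // a ⋖ b} := by
  rw [Nat.card_congr (Equiv.subtypeProdEquivSigmaSubtype fun a b => a ⋖ b), Nat.card_sigma]

theorem Fintype.sum_comp_eval {ι : Type*} [Fintype ι] [DecidableEq ι] {α : ι → Type*}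
    [∀ i, Fintype (α i)] {M : Type*} [AddCommMonoid M] (i : ι) (g : α i → M) :
    ∑ a : ∀ j, α j, g (a i) = (∏ j : {j // j ≠ i}, Fintype.card (α j)) • ∑ y, g y := by
  rw [Fintype.sum_equiv (Equiv.piSplitAt i α) (fun a => g (a i)) (fun p => g p.1) fun _ => rfl,
    Fintype.sum_prod_type, Finset.smul_sum]
  simp

namespace Pi

variable {ι : Type*} [DecidableEq ι] {α : ι → Type*}

noncomputable def sigmaCovByEquiv [∀ i, PartialOrder (α i)] (a : ∀ i, α i) :
    (Σ i, {x // a i ⋖ x}) ≃ {b // a ⋖ b} :=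
  Equiv.ofBijective
    (fun p => ⟨update a p.1 p.2, covBy_iff_exists_right_eq.2 ⟨p.1, p.2, p.2.2, rfl⟩⟩) <| by
    constructor
    · rintro ⟨i, x, hx⟩ ⟨j, y, hy⟩ hxy
      have hupd : update a i x = update a j y := congrArg Subtype.val hxy
      obtain rfl | hij := eq_or_ne i j
      · obtain rfl := update_injective a i hupd
        rfl
      · have := congrFun hupd i
        rw [update_self, update_of_ne hij] at this
        exact absurd this hx.lt.ne'
    · rintro ⟨b, hb⟩
      obtain ⟨i, x, hx, rfl⟩ := covBy_iff_exists_right_eq.1 hb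
      exact ⟨⟨i, x, hx⟩, rfl⟩

theorem card_covBy [Fintype ι] [∀ i, PartialOrder (α i)] [∀ i, Finite (α i)] :
    Nat.card {p : (∀ i, α i) × (∀ i, α i) // p.1 ⋖ p.2} =
      ∑ i, Nat.card {p : α i × α i // p.1 ⋖ p.2} * ∏ j : {j // j ≠ i}, Nat.card (α j) := by
  have := fun i => Fintype.ofFinite (α i)
  calc _ = ∑ a : ∀ i, α i, ∑ i, Nat.card {x // a i ⋖ x} := by
        rw [card_covBy_eq_sum]
        refine Finset.sum_congr rfl fun a _ => ?_
        rw [← Nat.card_congr (sigmaCovByEquiv a), Nat.card_sigma]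
    _ = _ := by
      rw [Finset.sum_comm]
      refine Finset.sum_congr rfl fun i _ => ?_
      simp_rw [Fintype.sum_comp_eval i (fun y => Nat.card {x // y ⋖ x}), card_covBy_eq_sum,
        Nat.card_eq_fintype_card, smul_eq_mul, mul_comm]

end Pi

def cyclicGraphEdgesEquiv (G : Type*) [Group G] :
    cyclicGraphEdges G ≃
      {p : {H : Subgroup G | IsCyclic H} × {H : Subgroup G | IsCyclic H} // p.1 ⋖ p.2} where
  toFun e := ⟨(⟨e.1.1, e.2.1⟩, ⟨e.1.2, e.2.2.1⟩),
    e.2.2.2.1, fun {K} hAK hKB => e.2.2.2.2 K K.2 hAK hKB⟩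
  invFun p := ⟨(p.1.1, p.1.2), p.1.1.2, p.1.2.2, p.2.1,
    fun K hK hAK hKB => p.2.2 (c := ⟨K, hK⟩) hAK hKB⟩

theorem numCyclicEdges_eq_card_covBy (G : Type*) [Group G] :
    numCyclicEdges G =
      Nat.card {p : {H : Subgroup G | IsCyclic H} × {H : Subgroup G | IsCyclic H} // p.1 ⋖ p.2} :=
  Nat.card_congr (cyclicGraphEdgesEquiv G)

namespace Subgroup

variable {ι : Type*} {G : ι → Type*} [∀ i, Group (G i)]

theorem map_evalMonoidHom_pi (K : ∀ i, Subgroup (G i)) (i : ι) :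
    (pi univ K).map (Pi.evalMonoidHom G i) = K i := by
  classical
  refine le_antisymm (map_le_iff_le_comap.2 fun x hx => hx i trivial) fun x hx => ?_
  exact ⟨Pi.mulSingle i x, (mulSingle_mem_pi i x).2 fun _ => hx, Pi.mulSingle_eq_same i x⟩

variable [Finite ι]
  (hcop : Pairwise fun i j => Nat.Coprime (Nat.card (G i)) (Nat.card (G j)))
include hcop

theorem exists_pow_eq_mulSingle [DecidableEq ι] (i : ι) :
    ∃ n : ℕ, ∀ x : ∀ j, G j, x ^ n = Pi.mulSingle i (x i) := by
  have := Fintype.ofFinite ι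
  set m := ∏ j : {j // j ≠ i}, Nat.card (G j)
  have hm : (Nat.card (G i)).Coprime m := Nat.Coprime.prod_right fun j _ => hcop j.2.symm
  obtain ⟨n, hn_one, hn_zero⟩ := Nat.chineseRemainder hm 1 0
  refine ⟨n, fun x => funext fun j => ?_⟩
  obtain rfl | hji := eq_or_ne j i
  · rw [Pi.pow_apply, Pi.mulSingle_eq_same]
    have : x j ^ n = x j ^ 1 :=
      pow_eq_pow_iff_modEq.2 (Nat.ModEq.of_dvd (_root_.orderOf_dvd_natCard (x j)) hn_one)
    rw [this, pow_one]
  · rw [Pi.pow_apply, Pi.mulSingle_eq_of_ne hji, ← orderOf_dvd_iff_pow_eq_one]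
    calc orderOf (x j) ∣ Nat.card (G j) := _root_.orderOf_dvd_natCard _
      _ ∣ m := Finset.dvd_prod_of_mem _ (Finset.mem_univ (⟨j, hji⟩ : {j // j ≠ i}))
      _ ∣ n := Nat.modEq_zero_iff_dvd.1 hn_zero

theorem mulSingle_mem_of_mem [DecidableEq ι] (H : Subgroup (∀ i, G i)) {x : ∀ i, G i}
    (hx : x ∈ H) (i : ι) : Pi.mulSingle i (x i) ∈ H := by
  obtain ⟨n, hn⟩ := exists_pow_eq_mulSingle hcop i
  exact hn x ▸ pow_mem hx n

theorem pi_map_evalMonoidHom (H : Subgroup (∀ i, G i)) :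
    pi univ (fun i => H.map (Pi.evalMonoidHom G i)) = H := by
  classical
  refine le_antisymm (pi_le_iff.2 fun i => ?_) fun x hx i _ => mem_map_of_mem _ hx
  rintro _ ⟨_, ⟨x, hx, rfl⟩, rfl⟩
  exact mulSingle_mem_of_mem hcop H hx i

def orderIsoPiOfCoprime : Subgroup (∀ i, G i) ≃o ∀ i, Subgroup (G i) where
  toFun H i := H.map (Pi.evalMonoidHom G i)
  invFun K := pi univ K
  left_inv := pi_map_evalMonoidHom hcop
  right_inv K := funext (map_evalMonoidHom_pi K)
  map_rel_iff' {A B} := by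
    refine ⟨fun h => ?_, fun h i => map_mono h⟩
    rw [← pi_map_evalMonoidHom hcop A, ← pi_map_evalMonoidHom hcop B]
    exact fun x hx i hi => h i (hx i hi)

theorem isCyclic_iff_forall_isCyclic_map (H : Subgroup (∀ i, G i)) :
    IsCyclic H ↔ ∀ i, IsCyclic (H.map (Pi.evalMonoidHom G i)) := by
  refine ⟨fun _ i => isCyclic_of_surjective _ ((Pi.evalMonoidHom G i).subgroupMap_surjective H),
    fun h => ?_⟩
  choose g hg using fun i => (Subgroup.isCyclic_iff_exists_zpowers_eq_top _).1 (h i)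
  suffices zpowers g = H from this ▸ inferInstance
  apply (orderIsoPiOfCoprime hcop).injective
  funext i
  exact (MonoidHom.map_zpowers _ g).trans (hg i)

def cyclicOrderIsoPiOfCoprime :
    {H : Subgroup (∀ i, G i) | IsCyclic H} ≃o ∀ i, {H : Subgroup (G i) | IsCyclic H} where
  toEquiv := ((orderIsoPiOfCoprime hcop).toEquiv.subtypeEquiv
    (isCyclic_iff_forall_isCyclic_map hcop)).trans Equiv.subtypePiEquivPi
  map_rel_iff' := (orderIsoPiOfCoprime hcop).le_iff_le

end Subgroup

theorem numCyclicEdges_pi {ι : Type*} [Fintype ι] (G : ι → Type*)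
    [∀ i, Group (G i)] [∀ i, Finite (G i)]
    (hcop : Pairwise fun i j => Nat.Coprime (Nat.card (G i)) (Nat.card (G j))) :
    (numCyclicEdges (∀ i, G i) : ℚ) =
      (∑ i, (numCyclicEdges (G i) : ℚ) / Nat.card {H : Subgroup (G i) | IsCyclic H}) *
        ∏ i, (Nat.card {H : Subgroup (G i) | IsCyclic H} : ℚ) := by
  classical
  have hcount : numCyclicEdges (∀ i, G i) = ∑ i, numCyclicEdges (G i) *
      ∏ j : {j // j ≠ i}, Nat.card {H : Subgroup (G j) | IsCyclic H} := by
    simp only [numCyclicEdges_eq_card_covBy,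
      (Subgroup.cyclicOrderIsoPiOfCoprime hcop).card_covBy_eq, Pi.card_covBy]
  have hcard_ne_zero (i : ι) : (Nat.card {H : Subgroup (G i) | IsCyclic H} : ℚ) ≠ 0 := by
    have : Nonempty {H : Subgroup (G i) | IsCyclic H} := ⟨⟨⊥, Bot.isCyclic⟩⟩
    exact_mod_cast Nat.card_pos.ne'
  rw [hcount, Finset.sum_mul]
  push_cast
  refine Finset.sum_congr rfl fun i _ => ?_
  rw [Fintype.prod_eq_mul_prod_subtype_ne _ i, ← mul_assoc, div_mul_cancel₀ _ (hcard_ne_zero i)]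
end

section
/- For a finite p-group G of order p^m, the number of cyclic subgroups of G is at least m + 1, with equality if and only if G is cyclic. -/
/-!
If `N` is a proper subgroup of a finite group `G` and `g ∉ N`, then `⟨g⟩` is a cyclic subgroup of
`G` not coming from `N`, so `G` has more cyclic subgroups than `N`. A group of order `p ^ m` has
a subgroup of order `p ^ (m - 1)`, so induction on `m` gives at least `m + 1` cyclic subgroups.
If there are exactly `m + 1`, then `⟨g⟩` is the only cyclic subgroup outside such an `N`, so every
element lies in `N` or in `⟨g⟩`; a group is never the union of two proper subgroups, so
`G = ⟨g⟩`. Conversely, a subgroup of a cyclic group is determined by its order, which divides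
`p ^ m`, leaving at most `m + 1` subgroups.
-/

open Subgroup

def cyclicSubgroups (G : Type*) [Group G] : Set (Subgroup G) := {H | IsCyclic H}

section

variable {G : Type*} [Group G]

theorem zpowers_mem_cyclicSubgroups (g : G) : zpowers g ∈ cyclicSubgroups G :=
  isCyclic_zpowers g

theorem map_mem_cyclicSubgroups {G' : Type*} [Group G'] (f : G →* G') {H : Subgroup G}
    (hH : H ∈ cyclicSubgroups G) : H.map f ∈ cyclicSubgroups G' :=
  haveI : IsCyclic H := hH
  isCyclic_of_surjective (f.subgroupMap H) (f.subgroupMap_surjective H)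

theorem mem_of_zpowers_mem_image_map_subtype {N : Subgroup G} {S : Set (Subgroup N)} {g : G}
    (h : zpowers g ∈ map N.subtype '' S) : g ∈ N := by
  obtain ⟨K, -, hK⟩ := h
  exact map_subtype_le K (hK ▸ mem_zpowers g)

theorem insert_zpowers_image_map_subtype_subset (N : Subgroup G) (g : G) :
    insert (zpowers g) (map N.subtype '' cyclicSubgroups N) ⊆ cyclicSubgroups G := by
  rintro H (rfl | ⟨K, hK, rfl⟩)
  · exact zpowers_mem_cyclicSubgroups g
  · exact map_mem_cyclicSubgroups N.subtype hK

variable [Finite G]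

theorem ncard_insert_zpowers_image_map_subtype {N : Subgroup G} {g : G} (hg : g ∉ N) :
    (insert (zpowers g) (map N.subtype '' cyclicSubgroups N)).ncard =
      Nat.card (cyclicSubgroups N) + 1 := by
  rw [Set.ncard_insert_of_notMem (fun h ↦ hg (mem_of_zpowers_mem_image_map_subtype h)),
    Set.ncard_image_of_injective _ (map_injective N.subtype_injective), Nat.card_coe_set_eq]

theorem card_cyclicSubgroups_lt_of_ne_top {N : Subgroup G} (hN : N ≠ ⊤) :
    Nat.card (cyclicSubgroups N) < Nat.card (cyclicSubgroups G) := by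
  obtain ⟨g, hg⟩ := SetLike.exists_not_mem_of_ne_top N hN
  rw [Nat.lt_iff_add_one_le, ← ncard_insert_zpowers_image_map_subtype hg, Nat.card_coe_set_eq]
  exact Set.ncard_le_ncard (insert_zpowers_image_map_subtype_subset N g)

theorem isCyclic_of_card_cyclicSubgroups_eq_add_one {N : Subgroup G} (hN : N ≠ ⊤)
    (h : Nat.card (cyclicSubgroups G) = Nat.card (cyclicSubgroups N) + 1) : IsCyclic G := by
  obtain ⟨g, hg⟩ := SetLike.exists_not_mem_of_ne_top N hN
  have hcyc : insert (zpowers g) (map N.subtype '' cyclicSubgroups N) = cyclicSubgroups G :=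
    Set.eq_of_subset_of_ncard_le (insert_zpowers_image_map_subtype_subset N g)
      (by rw [ncard_insert_zpowers_image_map_subtype hg, ← h, Nat.card_coe_set_eq])
  have hcover : ((⊤ : Subgroup G) : Set G) ⊆ N ∪ zpowers g := by
    intro x _
    by_cases hx : x ∈ N
    · exact Or.inl hx
    · have hx' := hcyc ▸ zpowers_mem_cyclicSubgroups x
      rcases hx' with hxg | hxN
      · exact Or.inr (hxg ▸ mem_zpowers x)
      · exact absurd (mem_of_zpowers_mem_image_map_subtype hxN) hx
  rcases SubgroupClass.subset_union.mp hcover with htop | htop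
  · exact absurd (top_le_iff.mp htop) hN
  · exact isCyclic_iff_exists_zpowers_eq_top.mpr ⟨g, top_le_iff.mp htop⟩

theorem exists_subgroup_ne_top_card_eq_prime_pow {p m : ℕ} (hp : p.Prime)
    (hG : Nat.card G = p ^ (m + 1)) : ∃ N : Subgroup G, N ≠ ⊤ ∧ Nat.card N = p ^ m := by
  have : Fact p.Prime := ⟨hp⟩
  obtain ⟨N, hN⟩ := Sylow.exists_subgroup_card_pow_prime p (hG ▸ pow_dvd_pow p m.le_succ)
  refine ⟨N, fun htop ↦ ?_, hN⟩
  rw [htop, card_top, hG] at hN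
  have := Nat.pow_right_injective hp.two_le hN
  omega

theorem add_one_le_card_cyclicSubgroups {p m : ℕ} (hp : p.Prime) (hG : Nat.card G = p ^ m) :
    m + 1 ≤ Nat.card (cyclicSubgroups G) := by
  induction m generalizing G with
  | zero =>
    rw [Nat.card_coe_set_eq]
    exact (Set.ncard_pos (Set.toFinite _)).mpr ⟨_, zpowers_mem_cyclicSubgroups (1 : G)⟩
  | succ m ih =>
    obtain ⟨N, hN, hNcard⟩ := exists_subgroup_ne_top_card_eq_prime_pow hp hG
    exact (ih hNcard).trans_lt (card_cyclicSubgroups_lt_of_ne_top hN)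

theorem isCyclic_of_card_cyclicSubgroups_eq {p m : ℕ} (hp : p.Prime) (hG : Nat.card G = p ^ m)
    (h : Nat.card (cyclicSubgroups G) = m + 1) : IsCyclic G := by
  cases m with
  | zero =>
    have := (Nat.card_eq_one_iff_unique.mp (hG.trans (pow_zero p))).1
    exact isCyclic_of_subsingleton
  | succ m =>
    obtain ⟨N, hN, hNcard⟩ := exists_subgroup_ne_top_card_eq_prime_pow hp hG
    have hlow := add_one_le_card_cyclicSubgroups hp hNcard
    have hlt := card_cyclicSubgroups_lt_of_ne_top hN
    exact isCyclic_of_card_cyclicSubgroups_eq_add_one hN (by omega)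

theorem IsCyclic.coe_subgroup_eq_setOf_pow_card_eq_one [IsCyclic G] (H : Subgroup G) :
    (H : Set G) = {x | x ^ Nat.card H = 1} := by
  classical
  have := Fintype.ofFinite G
  refine Set.eq_of_subset_of_ncard_le (fun x hx ↦ ?_) ?_
  · exact (H.coe_pow ⟨x, hx⟩ _).symm.trans (congrArg Subtype.val pow_card_eq_one')
  · rw [Set.ncard_eq_toFinset_card', Set.toFinset_ofPred, ← Nat.card_coe_set_eq]
    exact IsCyclic.card_pow_eq_one_le Nat.card_pos

theorem IsCyclic.card_subgroup_le_card_divisors [IsCyclic G] :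
    Nat.card (Subgroup G) ≤ (Nat.card G).divisors.card := by
  let f : Subgroup G → (Nat.card G).divisors := fun H ↦
    ⟨Nat.card H, Nat.mem_divisors.mpr ⟨card_subgroup_dvd_card H, Nat.card_pos.ne'⟩⟩
  have hf : Function.Injective f := fun H K hHK ↦ SetLike.coe_injective <| by
    rw [coe_subgroup_eq_setOf_pow_card_eq_one H, coe_subgroup_eq_setOf_pow_card_eq_one K,
      show Nat.card H = Nat.card K from congrArg Subtype.val hHK]
  exact (Nat.card_le_card_of_injective f hf).trans_eq (Nat.card_eq_finsetCard _)

end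

theorem card_cyclic_subgroups_pGroup (G : Type*) [Group G] [Finite G]
    (p m : ℕ) (hp : p.Prime) (hcard : Nat.card G = p ^ m) :
    m + 1 ≤ Nat.card {H : Subgroup G | IsCyclic H} ∧
    (Nat.card {H : Subgroup G | IsCyclic H} = m + 1 ↔ IsCyclic G) := by
  refine ⟨add_one_le_card_cyclicSubgroups hp hcard,
    isCyclic_of_card_cyclicSubgroups_eq hp hcard, fun _ ↦ ?_⟩
  refine le_antisymm ?_ (add_one_le_card_cyclicSubgroups hp hcard)
  calc Nat.card (cyclicSubgroups G) ≤ Nat.card (Subgroup G) := by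
        rw [Nat.card_coe_set_eq]; exact Set.ncard_le_card _
    _ ≤ (p ^ m).divisors.card := hcard ▸ IsCyclic.card_subgroup_le_card_divisors
    _ = m + 1 := by rw [Nat.divisors_prime_pow hp]; simp
end
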